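/- Let K ≥ 2 be an even integer and m₁, …, m_K positive reals. In the Engel Lie group Ē, define the product P = c₁·c₂·…·c_{K+1}, where c_j = a^{e_j} for j odd and c_j = b^{e_j} for j even, with exponents e₁ = m₁, e_{K+1} = m_K, and e_j = m_{j−1} + m_j for 2 ≤ j ≤ K. Then the ℝ²-component of P equals (2·Σᵢ mᵢ, 0) and the last coordinate satisfies B(P) = −(1/3)·Σᵢ mᵢ³. -/
import Mathlib


noncomputable section

/-- The Engel Lie group `Ē`: underlying set `ℝ² × ℝ × ℝ`, with coordinates
`(x, y)` (endpoint), `A` (signed area) and `B` (the `y`-moment). -/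
@[ext]
structure Engel where
  x : ℝ
  y : ℝ
  A : ℝ
  B : ℝ

namespace Engel

instance : Mul Engel :=
  ⟨fun g h =>
    ⟨g.x + h.x, g.y + h.y,
     g.A + h.A + (g.x * h.y - g.y * h.x) / 2,
     g.B + h.B + g.y * h.A + (2 * g.y + h.y) * (g.x * h.y - g.y * h.x) / 6⟩⟩

instance : One Engel := ⟨⟨0, 0, 0, 0⟩⟩

instance : Inv Engel := ⟨fun g => ⟨-g.x, -g.y, -g.A, -g.B + g.y * g.A⟩⟩

@[simp] lemma mul_x (g h : Engel) : (g * h).x = g.x + h.x := rfl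
@[simp] lemma mul_y (g h : Engel) : (g * h).y = g.y + h.y := rfl
@[simp] lemma mul_A (g h : Engel) :
    (g * h).A = g.A + h.A + (g.x * h.y - g.y * h.x) / 2 := rfl
@[simp] lemma mul_B (g h : Engel) :
    (g * h).B = g.B + h.B + g.y * h.A
      + (2 * g.y + h.y) * (g.x * h.y - g.y * h.x) / 6 := rfl
@[simp] lemma one_x : (1 : Engel).x = 0 := rfl
@[simp] lemma one_y : (1 : Engel).y = 0 := rfl
@[simp] lemma one_A : (1 : Engel).A = 0 := rfl
@[simp] lemma one_B : (1 : Engel).B = 0 := rfl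
@[simp] lemma inv_x (g : Engel) : g⁻¹.x = -g.x := rfl
@[simp] lemma inv_y (g : Engel) : g⁻¹.y = -g.y := rfl
@[simp] lemma inv_A (g : Engel) : g⁻¹.A = -g.A := rfl
@[simp] lemma inv_B (g : Engel) : g⁻¹.B = -g.B + g.y * g.A := rfl

instance : Group Engel where
  mul_assoc a b c := by ext <;> simp <;> ring
  one_mul a := by ext <;> simp
  mul_one a := by ext <;> simp
  inv_mul_cancel a := by
    ext <;>
      simp only [mul_x, mul_y, mul_A, mul_B, inv_x, inv_y, inv_A, inv_B,
        one_x, one_y, one_A, one_B] <;> ring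

/-- `a^t`: the straight segment from `(0,0)` to `(t,t)`. -/
def aPow (t : ℝ) : Engel := ⟨t, t, 0, 0⟩

/-- `b^t`: the straight segment from `(0,0)` to `(t,-t)`. -/
def bPow (t : ℝ) : Engel := ⟨t, -t, 0, 0⟩

end Engel

namespace Engel

@[simp] lemma aPow_x (t : ℝ) : (aPow t).x = t := rfl
@[simp] lemma aPow_y (t : ℝ) : (aPow t).y = t := rfl
@[simp] lemma aPow_A (t : ℝ) : (aPow t).A = 0 := rfl
@[simp] lemma aPow_B (t : ℝ) : (aPow t).B = 0 := rfl
@[simp] lemma bPow_x (t : ℝ) : (bPow t).x = t := rfl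
@[simp] lemma bPow_y (t : ℝ) : (bPow t).y = -t := rfl
@[simp] lemma bPow_A (t : ℝ) : (bPow t).A = 0 := rfl
@[simp] lemma bPow_B (t : ℝ) : (bPow t).B = 0 := rfl

lemma aPow_add (s t : ℝ) : aPow (s + t) = aPow s * aPow t := by
  ext <;> simp <;> ring

/-- multiplying a `y = 0` element by the three-segment tail `a^s b^{s+t} a^t`. -/
lemma mul_tail (g : Engel) (hy : g.y = 0) (s t : ℝ) :
    (g * (aPow s * (bPow (s + t) * aPow t))).x = g.x + 2 * (s + t) ∧
    (g * (aPow s * (bPow (s + t) * aPow t))).y = 0 ∧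
    (g * (aPow s * (bPow (s + t) * aPow t))).B = g.B - (s ^ 3 + t ^ 3) / 3 := by
  refine ⟨?_, ?_, ?_⟩ <;> simp [hy] <;> ring

/-- the `K`-independent exponent function. -/
def ee (m : ℕ → ℝ) (j : ℕ) : ℝ := if j = 0 then m 0 else m (j - 1) + m j

/-- the product of the first `K` zig-zag segments. -/
def C (m : ℕ → ℝ) (K : ℕ) : Engel :=
  ((List.range K).map fun j => if j % 2 = 0 then aPow (ee m j) else bPow (ee m j)).prod

lemma helper (m : ℕ → ℝ) : ∀ n : ℕ,
    (C m (2 * n + 2) * aPow (m (2 * n + 1))).x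
        = 2 * ∑ i ∈ Finset.range (2 * n + 2), m i ∧
    (C m (2 * n + 2) * aPow (m (2 * n + 1))).y = 0 ∧
    (C m (2 * n + 2) * aPow (m (2 * n + 1))).B
        = -(1 / 3) * ∑ i ∈ Finset.range (2 * n + 2), m i ^ 3 := by
  intro n
  induction n with
  | zero =>
      have h2 : C m 2 = aPow (m 0) * bPow (m 0 + m 1) := by
        simp [C, List.range_succ, ee]
      rw [h2]
      refine ⟨?_, ?_, ?_⟩ <;> simp [Finset.sum_range_succ] <;> ring
  | succ n ih =>
      obtain ⟨ihx, ihy, ihB⟩ := ih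
      have e2 : (2 * n + 2) % 2 = 0 := by omega
      have e3 : (2 * n + 3) % 2 = 1 := by omega
      have hC : C m (2 * (n + 1) + 2)
          = C m (2 * n + 2) *
            (aPow (m (2 * n + 1) + m (2 * n + 2)) * bPow (m (2 * n + 2) + m (2 * n + 3))) := by
        have h4 : 2 * (n + 1) + 2 = (2 * n + 2) + 1 + 1 := by ring
        rw [C, h4, List.range_succ, List.range_succ, List.map_append, List.map_append,
          List.prod_append, List.prod_append]
        have hee2 : ee m (2 * n + 2) = m (2 * n + 1) + m (2 * n + 2) := by
          have : 2 * n + 2 - 1 = 2 * n + 1 := by omega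
          simp [ee, this]
        have hee3 : ee m (2 * n + 3) = m (2 * n + 2) + m (2 * n + 3) := by
          have : 2 * n + 3 - 1 = 2 * n + 2 := by omega
          simp [ee, this]
        simp [e2, e3, hee2, hee3, C, mul_assoc]
      have key : C m (2 * (n + 1) + 2) * aPow (m (2 * (n + 1) + 1))
          = (C m (2 * n + 2) * aPow (m (2 * n + 1))) *
            (aPow (m (2 * n + 2)) *
              (bPow (m (2 * n + 2) + m (2 * n + 3)) * aPow (m (2 * n + 3)))) := by
        have h5 : 2 * (n + 1) + 1 = 2 * n + 3 := by ring
        rw [hC, h5, aPow_add]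
        group
      rw [key]
      obtain ⟨tx, ty, tB⟩ := mul_tail (C m (2 * n + 2) * aPow (m (2 * n + 1))) ihy
        (m (2 * n + 2)) (m (2 * n + 3))
      have hs : 2 * (n + 1) + 2 = (2 * n + 2) + 1 + 1 := by ring
      rw [hs]
      have hi : 2 * n + 2 + 1 = 2 * n + 3 := by omega
      have hsum1 : ∑ i ∈ Finset.range (2 * n + 2 + 1 + 1), m i
          = (∑ i ∈ Finset.range (2 * n + 2), m i) + m (2 * n + 2) + m (2 * n + 3) := by
        rw [Finset.sum_range_succ (fun i => m i) (2 * n + 2 + 1),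
          Finset.sum_range_succ (fun i => m i) (2 * n + 2), hi]
      have hsum3 : ∑ i ∈ Finset.range (2 * n + 2 + 1 + 1), m i ^ 3
          = (∑ i ∈ Finset.range (2 * n + 2), m i ^ 3) + m (2 * n + 2) ^ 3
            + m (2 * n + 3) ^ 3 := by
        rw [Finset.sum_range_succ (fun i => m i ^ 3) (2 * n + 2 + 1),
          Finset.sum_range_succ (fun i => m i ^ 3) (2 * n + 2), hi]
      refine ⟨?_, ty, ?_⟩
      · rw [tx, ihx, hsum1]; ring
      · rw [tB, ihB, hsum3]; ring

/-- Let `K ≥ 2` be even and `m₁, …, m_K` positive reals (here `0`-indexed as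
`m 0, …, m (K-1)`). Consider the product `P = c₁·…·c_{K+1}` (here indexed by
`j = 0, …, K`), where `c_j = a^{e_j}` for `j` even and `c_j = b^{e_j}` for `j` odd,
with `e_0 = m 0`, `e_K = m (K-1)` and `e_j = m (j-1) + m j` for `1 ≤ j ≤ K-1`.
Then the ℝ²-component of `P` is `(2·Σᵢ mᵢ, 0)` and `B(P) = −(1/3)·Σᵢ mᵢ³`. -/
theorem zigzag_product_formula (K : ℕ) (hK : 2 ≤ K) (hKeven : Even K)
    (m : ℕ → ℝ) (hm : ∀ i < K, 0 < m i) :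
    let e : ℕ → ℝ := fun j => if j = 0 then m 0 else if j = K then m (K - 1)
      else m (j - 1) + m j
    let P : Engel :=
      ((List.range (K + 1)).map fun j =>
        if j % 2 = 0 then aPow (e j) else bPow (e j)).prod
    P.x = 2 * ∑ i ∈ Finset.range K, m i ∧ P.y = 0 ∧
      P.B = -(1 / 3) * ∑ i ∈ Finset.range K, m i ^ 3 := by
  intro e P
  obtain ⟨k, hk⟩ := hKeven
  obtain ⟨n, hn⟩ : ∃ n, K = 2 * n + 2 := ⟨k - 1, by omega⟩
  have hP : P = C m K * aPow (m (K - 1)) := by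
    have h1 : K + 1 = K + 1 := rfl
    show ((List.range (K + 1)).map fun j =>
        if j % 2 = 0 then aPow (e j) else bPow (e j)).prod = _
    rw [List.range_succ, List.map_append, List.prod_append]
    have hKmod : K % 2 = 0 := by omega
    have heK : e K = m (K - 1) := by
      have hK0 : K ≠ 0 := by omega
      simp [e, hK0]
    have hcong : ((List.range K).map fun j =>
        if j % 2 = 0 then aPow (e j) else bPow (e j)) =
        (List.range K).map fun j =>
        if j % 2 = 0 then aPow (ee m j) else bPow (ee m j) := by
      apply List.map_congr_left
      intro j hj
      have hjK : j < K := List.mem_range.mp hj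
      have hje : e j = ee m j := by
        by_cases h0 : j = 0
        · simp [e, ee, h0]
        · have : j ≠ K := by omega
          simp [e, ee, h0, this]
      rw [hje]
    rw [hcong]
    simp [C, hKmod, heK]
  rw [hP, hn]
  have hK1 : K - 1 = 2 * n + 1 := by omega
  rw [hn] at hK1
  rw [hK1]
  exact helper m n

end Engel
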